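/- arXiv:0802.0292 — 3 statements merged into one kernel-verified Lean document; each statement's English description precedes it below -/
import Mathlib

section
/- Let μ_k be normalized Haar measure on U(k) and f_{ij}(u) the (i,j)-entry of u. If the integral over U(k) of f_{i₁j₁}(u)⋯f_{iₘjₘ}(u) · conj(f_{s₁t₁}(u))⋯conj(f_{sᵣtᵣ}(u)) is nonzero, then m = r, the tuple (i₁,…,iₘ) is a permutation of (s₁,…,sᵣ), and (j₁,…,jₘ) is a permutation of (t₁,…,tᵣ). -/
/-!
Multiplying `u` by a diagonal unitary `D = diag(e^{i c_a})` multiplies the monomial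
`∏ u_{i_l j_l} ∏ conj u_{s_l t_l}` by the phase `exp(i (∑ c_{i_l} - ∑ c_{s_l}))` when `D` acts on
the left, and by `exp(i (∑ c_{j_l} - ∑ c_{t_l}))` when it acts on the right. The Haar measure of
the compact group `U(k)` is invariant under both, so a nonzero integral forces every such phase
to be `1`. Concentrating `c` on a single index shows that each index occurs equally often among
the `i`'s and the `s`'s (and among the `j`'s and the `t`'s), which gives the permutations.
-/

open MeasureTheory

noncomputable instance (k : ℕ) : MeasurableSpace (Matrix.unitaryGroup (Fin k) ℂ) := borel _
instance (k : ℕ) : BorelSpace (Matrix.unitaryGroup (Fin k) ℂ) := ⟨rfl⟩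

open ComplexConjugate Finset

theorem MeasureTheory.Measure.isMulRightInvariant_of_isProbabilityMeasure {G : Type*} [Group G]
    [TopologicalSpace G] [IsTopologicalGroup G] [LocallyCompactSpace G] [MeasurableSpace G]
    [BorelSpace G] (μ : Measure G) [μ.IsHaarMeasure] [IsProbabilityMeasure μ] :
    μ.IsMulRightInvariant where
  map_mul_right_eq_self g :=
    have := isProbabilityMeasure_map (μ := μ) (measurable_mul_const g).aemeasurable
    isHaarMeasure_eq_of_isProbabilityMeasure _ _

theorem eq_one_of_integral_comp_eq_mul {α : Type*} [MeasurableSpace α] {μ : Measure α}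
    {F : α → ℂ} {φ : α → α} {p : ℂ} (hF : ∫ x, F x ∂μ ≠ 0)
    (hφ : ∫ x, F (φ x) ∂μ = ∫ x, F x ∂μ) (hp : ∀ x, F (φ x) = p * F x) : p = 1 := by
  rw [funext hp, integral_const_mul] at hφ
  exact (mul_eq_right₀ hF).1 hφ

theorem prod_exp_mul_mul_prod_conj_exp_mul {ι κ : Type*} [Fintype ι] [Fintype κ]
    (f : ι → ℝ) (g : κ → ℝ) (x : ι → ℂ) (y : κ → ℂ) :
    (∏ l, Complex.exp (f l * Complex.I) * x l) * ∏ l, conj (Complex.exp (g l * Complex.I) * y l)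
      = Complex.exp (((∑ l, f l) - ∑ l, g l : ℝ) * Complex.I) * ((∏ l, x l) * ∏ l, conj (y l)) := by
  simp only [map_mul, ← Complex.exp_conj, Finset.prod_mul_distrib, ← Complex.exp_sum,
    Complex.conj_ofReal, Complex.conj_I]
  push_cast
  rw [sub_mul, Complex.exp_sub, Finset.sum_mul, Finset.sum_mul]
  simp only [mul_neg, Finset.sum_neg_distrib, Complex.exp_neg]
  ring

theorem card_fiber_eq_of_forall_exp_eq_one {ι κ α : Type*} [Fintype ι] [Fintype κ]
    [DecidableEq α] (i : ι → α) (s : κ → α)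
    (h : ∀ c : α → ℝ, Complex.exp (((∑ l, c (i l)) - ∑ l, c (s l) : ℝ) * Complex.I) = 1)
    (a : α) : #{l | i l = a} = #{l | s l = a} := by
  by_contra hne
  have hsub : (#{l | i l = a} : ℝ) - #{l | s l = a} ≠ 0 := sub_ne_zero.2 (by exact_mod_cast hne)
  -- Witness: phase `π / (#i⁻¹(a) - #s⁻¹(a))` at `a` and `0` elsewhere, so the total phase is `π`.
  let c b : ℝ := if b = a then Real.pi / (#{l | i l = a} - #{l | s l = a}) else 0
  have hc : (∑ l, c (i l)) - ∑ l, c (s l) = Real.pi := by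
    simp only [c, Finset.sum_ite, Finset.sum_const, nsmul_eq_mul]
    field_simp
    ring
  have hπ := h c
  rw [hc, Complex.exp_pi_mul_I] at hπ
  norm_num at hπ

theorem exists_equiv_of_card_fiber_eq {ι κ α : Type*} [Fintype ι] [Fintype κ] [DecidableEq α]
    {i : ι → α} {s : κ → α} (h : ∀ a, #{l | i l = a} = #{l | s l = a}) :
    ∃ e : ι ≃ κ, ∀ l, i l = s (e l) := by
  let E a : {l // i l = a} ≃ {l // s l = a} :=
    Fintype.equivOfCardEq (by simpa only [Fintype.card_subtype] using h a)
  exact ⟨Equiv.ofFiberEquiv E, fun l => (Equiv.ofFiberEquiv_map E l).symm⟩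

namespace Matrix

variable {n : Type*} [Fintype n] [DecidableEq n]

instance unitaryGroup.compactSpace : CompactSpace (unitaryGroup n ℂ) := by
  have hball : IsCompact (Set.univ.pi fun _ => Set.univ.pi fun _ => Metric.closedBall 0 1 :
      Set (Matrix n n ℂ)) :=
    isCompact_univ_pi fun _ => isCompact_univ_pi fun _ => isCompact_closedBall (0 : ℂ) 1
  refine isCompact_iff_compactSpace.mp <|
    hball.of_isClosed_subset (isClosed_unitary (R := Matrix n n ℂ)) ?_
  exact fun U hU a _ b _ => by simpa using entry_norm_bound_of_unitary hU a b

noncomputable def diagonalUnitary (c : n → ℝ) : unitaryGroup n ℂ :=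
  ⟨diagonal fun a => Complex.exp (c a * Complex.I), by
    rw [mem_unitaryGroup_iff', star_eq_conjTranspose, diagonal_conjTranspose, diagonal_mul_diagonal]
    convert diagonal_one with a
    simp [← Complex.exp_conj, ← Complex.exp_add]⟩

theorem diagonalUnitary_mul_apply (c : n → ℝ) (u : unitaryGroup n ℂ) (a b : n) :
    (diagonalUnitary c * u : unitaryGroup n ℂ) a b
      = Complex.exp (c a * Complex.I) * (u : Matrix n n ℂ) a b :=
  diagonal_mul _ _ _ _

theorem mul_diagonalUnitary_apply (c : n → ℝ) (u : unitaryGroup n ℂ) (a b : n) :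
    (u * diagonalUnitary c : unitaryGroup n ℂ) a b
      = Complex.exp (c b * Complex.I) * (u : Matrix n n ℂ) a b :=
  (mul_diagonal _ _ _ _).trans (mul_comm _ _)

section Monomial

variable {ι κ : Type*} [Fintype ι] [Fintype κ]

noncomputable def unitaryMonomial (i j : ι → n) (s t : κ → n) (u : unitaryGroup n ℂ) : ℂ :=
  (∏ l, (u : Matrix n n ℂ) (i l) (j l)) * ∏ l, conj ((u : Matrix n n ℂ) (s l) (t l))

theorem unitaryMonomial_diagonalUnitary_mul (i j : ι → n) (s t : κ → n) (c : n → ℝ)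
    (u : unitaryGroup n ℂ) :
    unitaryMonomial i j s t (diagonalUnitary c * u)
      = Complex.exp (((∑ l, c (i l)) - ∑ l, c (s l) : ℝ) * Complex.I)
        * unitaryMonomial i j s t u := by
  simp only [unitaryMonomial, diagonalUnitary_mul_apply]
  exact prod_exp_mul_mul_prod_conj_exp_mul _ _ _ _

theorem unitaryMonomial_mul_diagonalUnitary (i j : ι → n) (s t : κ → n) (c : n → ℝ)
    (u : unitaryGroup n ℂ) :
    unitaryMonomial i j s t (u * diagonalUnitary c)
      = Complex.exp (((∑ l, c (j l)) - ∑ l, c (t l) : ℝ) * Complex.I)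
        * unitaryMonomial i j s t u := by
  simp only [unitaryMonomial, mul_diagonalUnitary_apply]
  exact prod_exp_mul_mul_prod_conj_exp_mul _ _ _ _

variable [MeasurableSpace (unitaryGroup n ℂ)] [BorelSpace (unitaryGroup n ℂ)]
  {μ : Measure (unitaryGroup n ℂ)} {i j : ι → n} {s t : κ → n}

theorem card_fiber_row_eq_of_integral_unitaryMonomial_ne_zero [μ.IsMulLeftInvariant]
    (h : ∫ u, unitaryMonomial i j s t u ∂μ ≠ 0) (a : n) :
    #{l | i l = a} = #{l | s l = a} :=
  card_fiber_eq_of_forall_exp_eq_one i s (fun c => eq_one_of_integral_comp_eq_mul h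
    (integral_mul_left_eq_self _ _) (unitaryMonomial_diagonalUnitary_mul i j s t c)) a

theorem card_fiber_col_eq_of_integral_unitaryMonomial_ne_zero [μ.IsMulRightInvariant]
    (h : ∫ u, unitaryMonomial i j s t u ∂μ ≠ 0) (a : n) :
    #{l | j l = a} = #{l | t l = a} :=
  card_fiber_eq_of_forall_exp_eq_one j t (fun c => eq_one_of_integral_comp_eq_mul h
    (integral_mul_right_eq_self _ _) (unitaryMonomial_mul_diagonalUnitary i j s t c)) a

end Monomial

end Matrix

/-- If `∫ f_{i₁j₁}(u)⋯f_{iₘjₘ}(u) conj(f_{s₁t₁}(u))⋯conj(f_{sᵣtᵣ}(u)) dμ(u) ≠ 0`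
for the normalized Haar measure `μ` on `U(k)`, then `m = r`, `(i₁,…,iₘ)` is a
permutation of `(s₁,…,sᵣ)`, and `(j₁,…,jₘ)` is a permutation of `(t₁,…,tᵣ)`. -/
theorem haar_moment_ne_zero_perm (k m r : ℕ)
    (μ : Measure (Matrix.unitaryGroup (Fin k) ℂ))
    [μ.IsHaarMeasure] [IsProbabilityMeasure μ]
    (i j : Fin m → Fin k) (s t : Fin r → Fin k)
    (h : (∫ u, (∏ l, (u : Matrix (Fin k) (Fin k) ℂ) (i l) (j l)) *
        ∏ l, (starRingEnd ℂ) ((u : Matrix (Fin k) (Fin k) ℂ) (s l) (t l)) ∂μ) ≠ 0) :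
    m = r ∧ (∃ e : Fin m ≃ Fin r, ∀ l, i l = s (e l)) ∧
      (∃ e : Fin m ≃ Fin r, ∀ l, j l = t (e l)) := by
  have := μ.isMulRightInvariant_of_isProbabilityMeasure
  obtain ⟨e, he⟩ := exists_equiv_of_card_fiber_eq
    (Matrix.card_fiber_row_eq_of_integral_unitaryMonomial_ne_zero h)
  exact ⟨Fin.equiv_iff_eq.mp ⟨e⟩, ⟨e, he⟩, exists_equiv_of_card_fiber_eq
    (Matrix.card_fiber_col_eq_of_integral_unitaryMonomial_ne_zero h)⟩
end

section
/- Let F, G be disjoint finite sets with |F| = n, |G| = m, let H = {1,…,k}, and let f_i : H → ℂ (i ∈ F) and g_j : H → ℂ (j ∈ G) be functions such that Σ_{a=1}^k f_i(a) = 0 for every i ∈ F. Then the absolute value of the sum, over all injections σ : F ∪ G → H, of (∏_{i∈F} f_i(σ(i)))·(∏_{j∈G} g_j(σ(j))), is at most k^{m + n/2}·(n+m)^n·∏_{i∈F}‖f_i‖_∞·∏_{j∈G}‖g_j‖_∞. -/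
/-!
Restricting an injection of `F ∪ G` to `G` splits the sum into at most `k ^ m` sums over injections
of `F` into the complement of a set of size `m`; on that complement each `f i` has total sum of
size at most `m ‖f i‖_∞`.

For such a sum over injections of `F`, fix the index `i₀`. Its value ranges over everything except
the values of the other indices, so the sum is `(∑ b, f i₀ b)` times the sum without `i₀`, minus,
for every other index `j`, the sum in which `f j` is replaced by `f j * f i₀`. The first term is
small; in each of the others `i₀` is merged into another index, whose total sum is then no longer
controlled. Trading two controlled indices for one uncontrolled index (which costs `k`) is why each
controlled index costs only `√k`, and induction on the number of controlled indices gives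
`√k ^ n * (m + n) ^ n`.
-/

open Finset Fintype

universe u

noncomputable def injSum {ι β R : Type*} [Fintype ι] [Fintype β] [CommRing R] (h : ι → β → R) :
    R :=
  ∑ σ : ι ↪ β, ∏ i, h i (σ i)

section InjSum

variable {ι κ β R : Type*} [Fintype ι] [Fintype κ] [Fintype β]

theorem sum_compl_range_embedding [DecidableEq β] [AddCommGroup R] (τ : ι ↪ β) (g : β → R) :
    ∑ b : ↥(Set.range τ)ᶜ, g b = ∑ b, g b - ∑ i, g (τ i) := by
  rw [eq_sub_iff_add_eq, Finset.sum_set_coe (s := (Set.range τ)ᶜ), Set.toFinset_compl,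
    ← Finset.sum_map univ τ, Finset.map_eq_image, ← Set.toFinset_range]
  exact Finset.sum_compl_add_sum _ _

omit [Fintype β] in
theorem prod_mul_mulSingle_apply [DecidableEq ι] [CommMonoid R] (h : ι → β → R) (j : ι)
    (c : β → R) (σ : ι → β) :
    ∏ i, (h * Pi.mulSingle j c : ι → β → R) i (σ i) = c (σ j) * ∏ i, h i (σ i) := by
  rw [mul_comm]
  simp only [Pi.mul_apply, Finset.prod_mul_distrib]
  congr 1
  rw [Fintype.prod_eq_single j fun i hi => by simp [Pi.mulSingle_eq_of_ne hi]]
  simp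

theorem card_embedding_le_pow : card (ι ↪ β) ≤ card β ^ card ι :=
  card_embedding_eq (α := ι) (β := β) ▸ Nat.descFactorial_le_pow _ _

section CommRing

variable [CommRing R]

theorem injSum_comp_equiv (e : κ ≃ ι) (h : ι → β → R) :
    injSum (fun j => h (e j)) = injSum h := by
  unfold injSum
  rw [← (Equiv.embeddingCongr e (Equiv.refl β)).sum_comp]
  refine Finset.sum_congr rfl fun σ _ => ?_
  rw [← e.prod_comp]
  simp

theorem injSum_option [DecidableEq κ] [DecidableEq β] (h : Option κ → β → R) :
    injSum h = (∑ b, h none b) * injSum (fun j => h (some j)) -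
      ∑ j, injSum ((fun j => h (some j)) * Pi.mulSingle j (h none) : κ → β → R) := by
  simp only [injSum, prod_mul_mulSingle_apply, Finset.mul_sum]
  rw [Finset.sum_comm, ← Finset.sum_sub_distrib,
    ← (Function.Embedding.optionEmbeddingEquiv κ β).symm.sum_comp, Fintype.sum_sigma]
  refine Finset.sum_congr rfl fun τ _ => ?_
  simp only [Fintype.prod_option, Function.Embedding.optionEmbeddingEquiv_symm_apply,
    Function.Embedding.optionElim_apply, Option.elim'_none, Option.elim'_some]
  rw [← Finset.sum_mul, sum_compl_range_embedding, sub_mul, Finset.sum_mul, Finset.sum_mul]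

theorem sum_embedding_sum_eq_sum_injSum [DecidableEq β] (u : ι → β → R) (v : κ → β → R) :
    ∑ σ : ι ⊕ κ ↪ β, (∏ i, u i (σ (.inl i))) * ∏ j, v j (σ (.inr j)) =
      ∑ τ : κ ↪ β, (∏ j, v j (τ j)) * injSum (fun i (b : ↥(Set.range τ)ᶜ) => u i b) := by
  rw [← ((Equiv.embeddingCongr (Equiv.sumComm ι κ) (Equiv.refl β)).trans
    Equiv.sumEmbeddingEquivSigmaEmbeddingRestricted).symm.sum_comp, Fintype.sum_sigma]
  refine sum_congr rfl fun τ _ => ?_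
  rw [injSum, mul_sum]
  refine sum_congr rfl fun ρ _ => ?_
  rw [mul_comm]
  rfl

end CommRing

variable [NormedCommRing R]

theorem norm_injSum_le_pow [NormOneClass R] (h : ι → β → R) (M : ι → ℝ) (hM0 : ∀ i, 0 ≤ M i)
    (hM : ∀ i b, ‖h i b‖ ≤ M i) : ‖injSum h‖ ≤ (card β : ℝ) ^ card ι * ∏ i, M i :=
  calc ‖injSum h‖ ≤ ∑ _σ : ι ↪ β, ∏ i, M i :=
        (norm_sum_le _ _).trans <| sum_le_sum fun σ _ => (Finset.norm_prod_le _ _).trans <|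
          prod_le_prod (fun i _ => norm_nonneg _) fun i _ => hM i (σ i)
    _ = card (ι ↪ β) * ∏ i, M i := by simp
    _ ≤ (card β : ℝ) ^ card ι * ∏ i, M i := by
        gcongr
        · exact prod_nonneg fun i _ => hM0 i
        · exact_mod_cast card_embedding_le_pow

theorem norm_injSum_option_le [DecidableEq κ] [DecidableEq β] (h : Option κ → β → R) :
    ‖injSum h‖ ≤ ‖∑ b, h none b‖ * ‖injSum (fun j => h (some j))‖ +
      ∑ j, ‖injSum ((fun j => h (some j)) * Pi.mulSingle j (h none) : κ → β → R)‖ := by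
  rw [injSum_option]
  exact (norm_sub_le _ _).trans (add_le_add (norm_mul_le _ _) (norm_sum_le _ _))

end InjSum

structure IsMajorant {ι β R : Type*} [Fintype β] [NormedCommRing R] (m : ℝ) (D : Finset ι)
    (h : ι → β → R) (M : ι → ℝ) : Prop where
  nonneg : ∀ i, 0 ≤ M i
  norm_le : ∀ i b, ‖h i b‖ ≤ M i
  norm_sum_le : ∀ i ∈ D, ‖∑ b, h i b‖ ≤ m * M i

namespace IsMajorant

variable {ι β R : Type*} [Fintype β] [NormedCommRing R] {m : ℝ} {D : Finset ι} {h : ι → β → R}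
  {M : ι → ℝ}

theorem subtype (hM : IsMajorant m D h M) (p : ι → Prop) [DecidablePred p] :
    IsMajorant m (D.subtype p) (fun j : Subtype p => h j) (fun j => M j) where
  nonneg j := hM.nonneg j
  norm_le j := hM.norm_le j
  norm_sum_le j hj := hM.norm_sum_le j (mem_subtype.1 hj)

theorem mul_mulSingle [DecidableEq ι] (hM : IsMajorant m D h M) {c : β → R} {C : ℝ} (hC : 0 ≤ C)
    (hc : ∀ b, ‖c b‖ ≤ C) (j : ι) :
    IsMajorant m (D.erase j) (h * Pi.mulSingle j c) (M * Pi.mulSingle j C) where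
  nonneg i := by
    rcases eq_or_ne i j with rfl | hij
    · simpa using mul_nonneg (hM.nonneg i) hC
    · simpa [Pi.mulSingle_eq_of_ne hij] using hM.nonneg i
  norm_le i b := by
    rcases eq_or_ne i j with rfl | hij
    · simpa using (norm_mul_le _ _).trans (mul_le_mul (hM.norm_le i b) (hc b) (norm_nonneg _)
        (hM.nonneg i))
    · simpa [Pi.mulSingle_eq_of_ne hij] using hM.norm_le i b
  norm_sum_le i hi := by
    simpa [Pi.mulSingle_eq_of_ne (ne_of_mem_erase hi)] using
      hM.norm_sum_le i (mem_of_mem_erase hi)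

end IsMajorant

-- `s` stands for `√k`, `d` counts the indices of controlled total sum and `e` the other ones.
def injBound (s m : ℝ) (d e : ℕ) : ℝ := s ^ (2 * e + d) * (m + d + e) ^ d

theorem le_injBound_succ {s m : ℝ} (hs : 1 ≤ s) (hm : 0 ≤ m) (d e : ℕ) :
    (m + e) * injBound s m d e + d * injBound s m (d - 1) (e + 1) ≤ injBound s m (d + 1) e := by
  set N : ℝ := m + d + e with hN
  set S : ℝ := s ^ (2 * e + (d + 1)) * (N + 1) ^ d
  have hfirst : injBound s m d e ≤ S :=
    mul_le_mul (pow_le_pow_right₀ hs (by omega)) (pow_le_pow_left₀ (by positivity) (by linarith) d)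
      (by positivity) (by positivity)
  have hsecond : d * injBound s m (d - 1) (e + 1) ≤ d * S := by
    rcases d with _ | d
    · simp
    refine mul_le_mul_of_nonneg_left (mul_le_mul (le_of_eq ?_) ?_ (by positivity) (by positivity))
      (Nat.cast_nonneg _)
    · congr 1; omega
    calc _ = N ^ d := by simp only [hN, add_tsub_cancel_right]; push_cast; ring
      _ ≤ (N + 1) ^ d := pow_le_pow_left₀ (by positivity) (by linarith) d
      _ ≤ (N + 1) ^ (d + 1) := pow_le_pow_right₀ (by linarith) (by omega)
  calc _ ≤ (m + e) * S + d * S := by gcongr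
    _ = N * S := by rw [hN]; ring
    _ ≤ (N + 1) * S := by gcongr; linarith
    _ = injBound s m (d + 1) e := by unfold injBound; push_cast; ring

theorem sum_injBound_card_erase {κ : Type*} [Fintype κ] [DecidableEq κ] (s m : ℝ)
    (D : Finset κ) :
    ∑ j, injBound s m #(D.erase j) (card κ - #(D.erase j)) =
      #D * injBound s m (#D - 1) (card κ - #D + 1) +
        (card κ - #D : ℕ) * injBound s m #D (card κ - #D) := by
  rw [← sum_add_sum_compl D]
  have hD : #D ≤ card κ := card_le_univ D
  congr 1
  · rw [← nsmul_eq_mul, ← sum_const]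
    refine sum_congr rfl fun j hj => ?_
    have : 1 ≤ #D := card_pos.2 ⟨j, hj⟩
    rw [card_erase_of_mem hj]
    congr 2; omega
  · rw [← nsmul_eq_mul, ← card_compl, ← sum_const]
    exact sum_congr rfl fun j hj => by rw [erase_eq_of_notMem (mem_compl.1 hj), card_compl]

theorem norm_injSum_le_injBound_zero {ι β R : Type*} [Fintype ι] [Fintype β] [NormedCommRing R]
    [NormOneClass R] {s : ℝ} (m : ℝ) (hβ : (card β : ℝ) ≤ s ^ 2) (h : ι → β → R) (M : ι → ℝ)
    (hM0 : ∀ i, 0 ≤ M i) (hM : ∀ i b, ‖h i b‖ ≤ M i) :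
    ‖injSum h‖ ≤ injBound s m 0 (card ι) * ∏ i, M i := by
  refine (norm_injSum_le_pow h M hM0 hM).trans ?_
  unfold injBound
  gcongr
  · exact prod_nonneg fun i _ => hM0 i
  · simpa [pow_mul] using pow_le_pow_left₀ (Nat.cast_nonneg _) hβ (card ι)

theorem norm_injSum_le_injBound {β R : Type*} [Fintype β] [DecidableEq β] [NormedCommRing R]
    [NormOneClass R] {s m : ℝ} (hs : 1 ≤ s) (hm : 0 ≤ m) (hβ : (card β : ℝ) ≤ s ^ 2) (d : ℕ) :
    ∀ {ι : Type u} [Fintype ι] [DecidableEq ι] (D : Finset ι) (h : ι → β → R) (M : ι → ℝ),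
      #D = d → IsMajorant m D h M → ‖injSum h‖ ≤ injBound s m d (card ι - d) * ∏ i, M i := by
  induction d using Nat.strong_induction_on with
  | _ d ih =>
  intro ι _ _ D h M hD hM
  obtain rfl | ⟨i0, hi0⟩ := D.eq_empty_or_nonempty
  · subst hD
    exact norm_injSum_le_injBound_zero m hβ h M hM.nonneg hM.norm_le
  obtain ⟨d, rfl⟩ : ∃ d', d = d' + 1 := ⟨#D - 1, by have := card_pos.2 ⟨i0, hi0⟩; omega⟩
  have hcard : card {i // i ≠ i0} - d = card ι - (d + 1) := by
    have := card_congr (Equiv.optionSubtypeNe i0)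
    rw [card_option] at this
    omega
  set κ := {i // i ≠ i0}
  set h' : κ → β → R := fun j => h j
  set M' : κ → ℝ := fun j => M j
  set D' : Finset κ := D.subtype (· ≠ i0)
  have hM' : IsMajorant m D' h' M' := hM.subtype _
  have hD' : #D' = d := by simp [D', card_subtype, filter_ne', card_erase_of_mem hi0, hD]
  have hsplit : ‖injSum h‖ ≤ ‖∑ b, h i0 b‖ * ‖injSum h'‖ +
      ∑ j, ‖injSum (h' * Pi.mulSingle j (h i0) : κ → β → R)‖ := by
    rw [← injSum_comp_equiv (Equiv.optionSubtypeNe i0)]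
    simpa using norm_injSum_option_le (fun o => h (Equiv.optionSubtypeNe i0 o))
  have hrest : ‖injSum h'‖ ≤ injBound s m d (card ι - (d + 1)) * ∏ j, M' j :=
    hcard ▸ ih d (by omega) D' h' M' hD' hM'
  have hmerge (j : κ) : ‖injSum (h' * Pi.mulSingle j (h i0) : κ → β → R)‖ ≤
      injBound s m #(D'.erase j) (card κ - #(D'.erase j)) * (M i0 * ∏ j, M' j) := by
    have hprod : ∏ i, (M' * Pi.mulSingle j (M i0) : κ → ℝ) i = M i0 * ∏ i, M' i := by
      simp [prod_mul_distrib, mul_comm]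
    rw [← hprod]
    exact ih _ (by have := card_erase_le (s := D') (a := j); omega) (D'.erase j) _ _ rfl
      (hM'.mul_mulSingle (hM.nonneg i0) (hM.norm_le i0) j)
  calc ‖injSum h‖ ≤ _ := hsplit
    _ ≤ m * M i0 * (injBound s m d (card ι - (d + 1)) * ∏ j, M' j) +
        ∑ j, injBound s m #(D'.erase j) (card κ - #(D'.erase j)) * (M i0 * ∏ j, M' j) :=
      add_le_add (mul_le_mul (hM.norm_sum_le i0 hi0) hrest (norm_nonneg _)
        (mul_nonneg hm (hM.nonneg i0))) (sum_le_sum fun j _ => hmerge j)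
    _ = ((m + ↑(card ι - (d + 1))) * injBound s m d (card ι - (d + 1)) +
          d * injBound s m (d - 1) (card ι - (d + 1) + 1)) * (M i0 * ∏ j, M' j) := by
      rw [← sum_mul, sum_injBound_card_erase, hD', hcard]
      ring
    _ ≤ injBound s m (d + 1) (card ι - (d + 1)) * ∏ i, M i := by
      rw [Fintype.prod_eq_mul_prod_subtype_ne M i0]
      exact mul_le_mul_of_nonneg_right (le_injBound_succ hs hm _ _)
        (mul_nonneg (hM.nonneg i0) (prod_nonneg fun j _ => hM.nonneg j))

theorem norm_injSum_compl_range_le {ι : Type u} {κ β R : Type*} [Fintype ι] [DecidableEq ι]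
    [Fintype κ] [Fintype β] [DecidableEq β] [Nonempty β] [NormedCommRing R] [NormOneClass R]
    (u : ι → β → R) (M : ι → ℝ) (hu : ∀ i, ∑ b, u i b = 0) (hM : ∀ i b, ‖u i b‖ ≤ M i)
    (τ : κ ↪ β) :
    ‖injSum (fun i (b : ↥(Set.range τ)ᶜ) => u i b)‖ ≤
      √(card β) ^ card ι * (card κ + card ι) ^ card ι * ∏ i, M i := by
  have hsum (i : ι) : ‖∑ b : ↥(Set.range τ)ᶜ, u i b‖ ≤ card κ * M i := by
    rw [sum_compl_range_embedding, hu, zero_sub, norm_neg]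
    refine (norm_sum_le _ _).trans ?_
    simpa using sum_le_sum fun j (_ : j ∈ univ) => hM i (τ j)
  have hcard : (card ↥(Set.range τ)ᶜ : ℝ) ≤ √(card β) ^ 2 := by
    rw [Real.sq_sqrt (Nat.cast_nonneg _)]
    exact_mod_cast card_subtype_le _
  simpa [injBound] using norm_injSum_le_injBound (Real.one_le_sqrt.2 (Nat.one_le_cast.2 card_pos))
    (Nat.cast_nonneg (card κ)) hcard _ univ (fun i (b : ↥(Set.range τ)ᶜ) => u i b) M rfl
    ⟨fun i => (norm_nonneg _).trans (hM i (Classical.arbitrary β)), fun i b => hM i b,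
      fun i _ => hsum i⟩

theorem norm_sum_embedding_sum_le {ι : Type u} {κ β R : Type*} [Fintype ι] [DecidableEq ι]
    [Fintype κ] [Fintype β] [DecidableEq β] [Nonempty β] [NormedCommRing R] [NormOneClass R]
    (u : ι → β → R) (v : κ → β → R) (Mu : ι → ℝ) (Mv : κ → ℝ) (hu : ∀ i, ∑ b, u i b = 0)
    (hMu : ∀ i b, ‖u i b‖ ≤ Mu i) (hMv : ∀ j b, ‖v j b‖ ≤ Mv j) :
    ‖∑ σ : ι ⊕ κ ↪ β, (∏ i, u i (σ (.inl i))) * ∏ j, v j (σ (.inr j))‖ ≤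
      (card β : ℝ) ^ card κ * (√(card β) ^ card ι * (card κ + card ι) ^ card ι) *
        (∏ i, Mu i) * ∏ j, Mv j := by
  have hMv0 (j : κ) : 0 ≤ Mv j := (norm_nonneg _).trans (hMv j (Classical.arbitrary β))
  rw [sum_embedding_sum_eq_sum_injSum]
  calc _ ≤ ∑ τ : κ ↪ β, (∏ j, Mv j) *
        (√(card β) ^ card ι * (card κ + card ι) ^ card ι * ∏ i, Mu i) := by
          refine (norm_sum_le _ _).trans (sum_le_sum fun τ _ => ?_)
          refine (norm_mul_le _ _).trans (mul_le_mul ?_ (norm_injSum_compl_range_le u Mu hu hMu τ)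
            (norm_nonneg _) (prod_nonneg fun j _ => hMv0 j))
          exact (Finset.norm_prod_le _ _).trans (prod_le_prod (fun j _ => norm_nonneg _)
            fun j _ => hMv j (τ j))
    _ = card (κ ↪ β) * (√(card β) ^ card ι * (card κ + card ι) ^ card ι) *
        (∏ i, Mu i) * ∏ j, Mv j := by
      simp only [sum_const, card_univ, nsmul_eq_mul]
      ring
    _ ≤ _ := by
      gcongr
      · exact prod_nonneg fun j _ => hMv0 j
      · exact prod_nonneg fun i _ => (norm_nonneg _).trans (hMu i (Classical.arbitrary β))
      · exact_mod_cast card_embedding_le_pow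

/-- Let `F, G` be disjoint finite sets of naturals with `|F| = n`, `|G| = m`,
`H = {1,…,k}`, and `f_i, g_j : H → ℂ` with `∑_a f_i(a) = 0` for every `i ∈ F`.
Then `|∑_{σ : F ∪ G ↪ H} (∏_{i∈F} f_i(σ(i)))(∏_{j∈G} g_j(σ(j)))|
  ≤ k^{m+n/2} (n+m)^n ∏_{i∈F} ‖f_i‖_∞ ∏_{j∈G} ‖g_j‖_∞`. -/
theorem sum_over_injections_bound (n m k : ℕ) (hk : 0 < k)
    (F G : Finset ℕ) (hFG : Disjoint F G) (hF : F.card = n) (hG : G.card = m)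
    (f g : ℕ → Fin k → ℂ)
    (hf0 : ∀ i ∈ F, ∑ a, f i a = 0) :
    ‖∑ σ : ((F ∪ G : Finset ℕ) : Type) ↪ Fin k,
        (∏ i : F, f i (σ ⟨i.1, Finset.mem_union_left G i.2⟩)) *
        ∏ j : G, g j (σ ⟨j.1, Finset.mem_union_right F j.2⟩)‖
      ≤ (k : ℝ) ^ ((m : ℝ) + n / 2) * ((n : ℝ) + m) ^ n *
        (∏ i : F, ⨆ a, ‖f i a‖) * ∏ j : G, ⨆ a, ‖g j a‖ := by
  have : Nonempty (Fin k) := ⟨⟨0, hk⟩⟩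
  have hsup (h : ℕ → Fin k → ℂ) (i : ℕ) (a : Fin k) : ‖h i a‖ ≤ ⨆ a, ‖h i a‖ :=
    le_ciSup (f := fun a => ‖h i a‖) (Set.finite_range _).bddAbove a
  have hpow : (k : ℝ) ^ ((m : ℝ) + n / 2) = k ^ m * √k ^ n := by
    rw [Real.rpow_add (by exact_mod_cast hk), Real.rpow_natCast, Real.sqrt_eq_rpow,
      ← Real.rpow_mul_natCast (Nat.cast_nonneg k)]
    ring_nf
  refine (congrArg norm <| (Equiv.embeddingCongr (Equiv.Finset.union F G hFG).symm
    (Equiv.refl (Fin k))).sum_comp fun σ => (∏ i : F, f i (σ (.inl i))) * ∏ j : G, g j (σ (.inr j))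
    ).trans_le ?_
  refine (norm_sum_embedding_sum_le (fun (i : F) a => f i a) (fun (j : G) a => g j a) _ _
    (fun i => hf0 i i.2) (fun i => hsup f i) (fun j => hsup g j)).trans_eq ?_
  simp only [card_coe, Fintype.card_fin, hF, hG, hpow]
  ring
end

section
/- For a positive integer m ≤ k and distinct indices: if the index set {i₁,…,iₘ} has cardinality exactly m, then the integral over U(k) of |f_{i₁j₁}(u)|²⋯|f_{iₘjₘ}(u)|² dμ_k(u) is at most 1/P(k,m) ≤ m^m/k^m. -/
open MeasureTheory

namespace Matrix

theorem permMatrix_mem_unitaryGroup {n R : Type*} [Fintype n] [DecidableEq n] [CommRing R]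
    [StarRing R] (σ : Equiv.Perm n) : σ.permMatrix R ∈ unitaryGroup n R := by
  rw [mem_unitaryGroup_iff', star_eq_conjTranspose, conjTranspose_permMatrix, ← permMatrix_mul,
    mul_inv_cancel, permMatrix_one]

theorem sum_norm_sq_col_of_mem_unitaryGroup {n 𝕜 : Type*} [Fintype n] [DecidableEq n]
    [RCLike 𝕜] {U : Matrix n n 𝕜} (hU : U ∈ unitaryGroup n 𝕜) (c : n) :
    ∑ a, ‖U a c‖ ^ 2 = 1 := by
  have h := congr_fun₂ ((mem_unitaryGroup_iff').mp hU) c c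
  simp only [mul_apply, star_apply, RCLike.star_def, RCLike.conj_mul, one_apply_eq] at h
  exact_mod_cast h

end Matrix

theorem Finset.sum_embedding_prod_le_prod_sum {α β : Type*} [Fintype α] [DecidableEq α]
    [Fintype β] [DecidableEq β] {f : α → β → ℝ} (hf : ∀ a b, 0 ≤ f a b) :
    ∑ e : α ↪ β, ∏ a, f a (e a) ≤ ∏ a, ∑ b, f a b := by
  rw [Fintype.prod_sum]
  calc ∑ e : α ↪ β, ∏ a, f a (e a)
      = ∑ g ∈ univ.map ⟨fun e : α ↪ β => ⇑e, DFunLike.coe_injective⟩,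
          ∏ a, f a (g a) := by
        rw [sum_map]; rfl
    _ ≤ ∑ g : α → β, ∏ a, f a (g a) :=
        sum_le_sum_of_subset_of_nonneg (subset_univ _) fun g _ _ =>
          prod_nonneg fun a _ => hf a _

theorem Nat.pow_le_pow_mul_descFactorial {m k : ℕ} (h : m ≤ k) :
    k ^ m ≤ m ^ m * k.descFactorial m := by
  rcases Nat.eq_zero_or_pos m with rfl | hm
  · simp
  have hk : k ≤ m * (k + 1 - m) := by
    obtain ⟨d, rfl⟩ := Nat.exists_eq_add_of_le h
    rw [show m + d + 1 - m = d + 1 by omega]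
    nlinarith
  calc k ^ m ≤ (m * (k + 1 - m)) ^ m := Nat.pow_le_pow_left hk m
    _ = m ^ m * (k + 1 - m) ^ m := mul_pow _ _ _
    _ ≤ m ^ m * k.descFactorial m := Nat.mul_le_mul_left _ (k.pow_sub_le_descFactorial m)

theorem one_div_descFactorial_le_pow_div_pow {m k : ℕ} (h : m ≤ k) :
    (1 : ℝ) / k.descFactorial m ≤ (m : ℝ) ^ m / (k : ℝ) ^ m := by
  have hD : 0 < k.descFactorial m := Nat.descFactorial_pos.mpr h
  have hK : 0 < k ^ m := hD.trans_le (k.descFactorial_le_pow m)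
  rw [div_le_div_iff₀ (by exact_mod_cast hD) (by exact_mod_cast hK), one_mul]
  exact_mod_cast Nat.pow_le_pow_mul_descFactorial h

open Matrix Finset

section HaarMoments

variable {k : ℕ} (μ : Measure (unitaryGroup (Fin k) ℂ))

theorem integral_comp_submatrix_perm [μ.IsMulLeftInvariant] (σ : Equiv.Perm (Fin k))
    (F : Matrix (Fin k) (Fin k) ℂ → ℝ) :
    ∫ u, F ((u : Matrix (Fin k) (Fin k) ℂ).submatrix σ id) ∂μ = ∫ u, F u ∂μ := by
  let g : unitaryGroup (Fin k) ℂ := ⟨σ.permMatrix ℂ, permMatrix_mem_unitaryGroup σ⟩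
  have hg (u : unitaryGroup (Fin k) ℂ) :
      ((g * u : unitaryGroup (Fin k) ℂ) : Matrix (Fin k) (Fin k) ℂ) =
        (u : Matrix (Fin k) (Fin k) ℂ).submatrix σ id :=
    PEquiv.toMatrix_toPEquiv_mul σ _
  simp_rw [← hg]
  exact integral_mul_left_eq_self (fun u : unitaryGroup (Fin k) ℂ => F u) g

variable {m : ℕ}

noncomputable def prodNormSqEntries (e j : Fin m → Fin k) (u : unitaryGroup (Fin k) ℂ) : ℝ :=
  ∏ l, ‖(u : Matrix (Fin k) (Fin k) ℂ) (e l) (j l)‖ ^ 2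

theorem prodNormSqEntries_nonneg (e j : Fin m → Fin k) (u : unitaryGroup (Fin k) ℂ) :
    0 ≤ prodNormSqEntries e j u :=
  prod_nonneg fun _ _ => by positivity

theorem prodNormSqEntries_le_one (e j : Fin m → Fin k) (u : unitaryGroup (Fin k) ℂ) :
    prodNormSqEntries e j u ≤ 1 :=
  prod_le_one (fun _ _ => by positivity)
    fun _ _ => pow_le_one₀ (norm_nonneg _) (entry_norm_bound_of_unitary u.2 _ _)

variable (j : Fin m → Fin k)

theorem integral_prodNormSqEntries_eq [μ.IsMulLeftInvariant] (e e' : Fin m ↪ Fin k) :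
    ∫ u, prodNormSqEntries e j u ∂μ = ∫ u, prodNormSqEntries e' j u ∂μ := by
  obtain ⟨σ, hσ⟩ := Equiv.Perm.exists_extending_pair e e' e.injective e'.injective
  simpa only [prodNormSqEntries, submatrix_apply, id, hσ] using
    (integral_comp_submatrix_perm μ σ fun A => ∏ l, ‖A (e l) (j l)‖ ^ 2).symm

theorem integrable_prodNormSqEntries [IsFiniteMeasure μ] (e : Fin m → Fin k) :
    Integrable (prodNormSqEntries e j) μ := by
  have hcont : Continuous (prodNormSqEntries e j) := continuous_finsetProd _ fun l _ =>
    (continuous_subtype_val.matrix_elem _ _).norm.pow 2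
  refine Integrable.of_bound hcont.aestronglyMeasurable 1 (ae_of_all _ fun u => ?_)
  rw [Real.norm_of_nonneg (prodNormSqEntries_nonneg e j u)]
  exact prodNormSqEntries_le_one e j u

theorem sum_embedding_prodNormSqEntries_le_one (u : unitaryGroup (Fin k) ℂ) :
    ∑ e : Fin m ↪ Fin k, prodNormSqEntries e j u ≤ 1 :=
  (sum_embedding_prod_le_prod_sum
      (f := fun l a => ‖(u : Matrix (Fin k) (Fin k) ℂ) a (j l)‖ ^ 2)
      fun _ _ => by positivity).trans_eq <| by
    simp [sum_norm_sq_col_of_mem_unitaryGroup u.2]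

theorem integral_prodNormSqEntries_le_one_div_descFactorial [μ.IsMulLeftInvariant]
    [IsProbabilityMeasure μ] (e : Fin m ↪ Fin k) :
    ∫ u, prodNormSqEntries e j u ∂μ ≤ 1 / k.descFactorial m := by
  have hD : (0 : ℝ) < k.descFactorial m := by
    exact_mod_cast Nat.descFactorial_pos.mpr (Fin.le_of_embedding e)
  have hint (e' : Fin m ↪ Fin k) : Integrable (prodNormSqEntries e' j) μ :=
    integrable_prodNormSqEntries μ j e'
  rw [le_div_iff₀ hD]
  calc (∫ u, prodNormSqEntries e j u ∂μ) * k.descFactorial m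
      = ∑ e' : Fin m ↪ Fin k, ∫ u, prodNormSqEntries e' j u ∂μ := by
        simp [integral_prodNormSqEntries_eq μ j _ e, Fintype.card_embedding_eq, mul_comm]
    _ = ∫ u, ∑ e' : Fin m ↪ Fin k, prodNormSqEntries e' j u ∂μ :=
        (integral_finsetSum univ fun e' _ => hint e').symm
    _ ≤ ∫ _, 1 ∂μ :=
        integral_mono (integrable_finsetSum univ fun e' _ => hint e') (integrable_const 1)
          (sum_embedding_prodNormSqEntries_le_one j)
    _ = 1 := by simp

end HaarMoments

theorem haar_abs_sq_moment_distinct_bound_general (m k : ℕ)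
    (μ : Measure (Matrix.unitaryGroup (Fin k) ℂ))
    [μ.IsHaarMeasure] [IsProbabilityMeasure μ]
    (i j : Fin m → Fin k) (hi : Function.Injective i) :
    (∫ u, ∏ l, ‖(u : Matrix (Fin k) (Fin k) ℂ) (i l) (j l)‖ ^ 2 ∂μ)
        ≤ 1 / (k.descFactorial m) ∧
      (1 : ℝ) / (k.descFactorial m) ≤ (m : ℝ) ^ m / (k : ℝ) ^ m :=
  ⟨integral_prodNormSqEntries_le_one_div_descFactorial μ j ⟨i, hi⟩,
    one_div_descFactorial_le_pow_div_pow (Fin.le_of_injective i hi)⟩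

/-- For positive integers `m ≤ k`, if the row indices `i₁,…,iₘ` are pairwise
distinct, then `∫ |f_{i₁j₁}(u)|²⋯|f_{iₘjₘ}(u)|² dμₖ(u) ≤ 1/P(k,m) ≤ m^m/k^m`,
where `P(k,m) = k(k-1)⋯(k-m+1)`. -/
theorem haar_abs_sq_moment_distinct_bound (m k : ℕ) (hm : 0 < m) (hk : m ≤ k)
    (μ : Measure (Matrix.unitaryGroup (Fin k) ℂ))
    [μ.IsHaarMeasure] [IsProbabilityMeasure μ]
    (i j : Fin m → Fin k) (hi : Function.Injective i) :
    (∫ u, ∏ l, ‖(u : Matrix (Fin k) (Fin k) ℂ) (i l) (j l)‖ ^ 2 ∂μ)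
        ≤ 1 / (k.descFactorial m) ∧
      (1 : ℝ) / (k.descFactorial m) ≤ (m : ℝ) ^ m / (k : ℝ) ^ m :=
  haar_abs_sq_moment_distinct_bound_general m k μ i j hi
end
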